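/- arXiv:1304.0673 — 6 statements merged into one kernel-verified Lean document; each statement's English description precedes it below -/
import Mathlib

section
/- For the Richardson extrapolation table defined by T_{j,1} = (y(jh) - y(-jh))/(2jh) and T_{j,k+1} = T_{j,k} + (T_{j,k} - T_{j-1,k})/((1-k/j)^2 - 1), the entries satisfy the closed-form expression T_{j,k} = \sum_{i=1}^k \frac{2(-1)^{i+1} (j)_k^2}{(i-1)!\,(k-i)!\,(2j-k+i)_k\,(j-k+i)} T_{j-k+i,1}, where (n)_k = n!/(n-k)! denotes the falling factorial. -/
/-!
The recursion is Neville's scheme for evaluating at `x = 0` the polynomial interpolating the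
values `T m 1` at the nodes `x = m ^ 2`: in the step from column `k` to `k + 1` the outermost nodes
have ratio `(j - k) ^ 2 / j ^ 2 = (1 - k / j) ^ 2`. Hence `T j k` is the Lagrange extrapolant to `0`
through the nodes `m = j - k + 1, …, j`, whose weights `∏_{l ≠ m} l ^ 2 / ((l - m) (l + m))`
are products over an interval that evaluate to falling factorials and, up to sign, factorials.
-/

open Finset Polynomial
open scoped Nat

namespace Lagrange

variable {F ι : Type*} [Field F] [DecidableEq ι] {s : Finset ι} {v : ι → F}

theorem eval_zero_interpolate (r : ι → F) :
    (interpolate s v r).eval 0 = ∑ i ∈ s, r i * ∏ j ∈ s.erase i, v j / (v j - v i) := by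
  simp only [interpolate_apply, Lagrange.basis, basisDivisor, eval_finsetSum, eval_mul, eval_C,
    eval_prod, eval_sub, eval_X]
  refine sum_congr rfl fun i _ => congrArg _ (prod_congr rfl fun j _ => ?_)
  rw [zero_sub, ← neg_sub, inv_neg, neg_mul_neg, inv_mul_eq_div]

theorem eval_zero_interpolate_neville (hvs : Set.InjOn v s) {i j : ι} (hi : i ∈ s)
    (hj : j ∈ s) (hij : i ≠ j) (hj0 : v j ≠ 0) (r : ι → F) :
    (interpolate s v r).eval 0 =
      (interpolate (s.erase i) v r).eval 0 +
        ((interpolate (s.erase i) v r).eval 0 - (interpolate (s.erase j) v r).eval 0) /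
          (v i / v j - 1) := by
  have hvij : v i - v j ≠ 0 := sub_ne_zero.2 (hvs.ne hi hj hij)
  have hvji : v j - v i ≠ 0 := sub_ne_zero.2 (hvs.ne hj hi hij.symm)
  rw [interpolate_eq_add_interpolate_erase r hvs hi hj hij, div_sub_one hj0]
  simp only [eval_add, eval_mul, basisDivisor, eval_C, eval_sub, eval_X]
  field_simp
  ring

end Lagrange

theorem prod_Ioc_add_eq_descFactorial (a k c : ℕ) :
    ∏ l ∈ Ioc a (a + k), (l + c) = (a + k + c).descFactorial k := by
  induction k with
  | zero => simp
  | succ k ih =>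
    rw [← add_assoc, prod_Ioc_succ_top (by omega), ih,
      show a + k + 1 + c = a + k + c + 1 by omega, Nat.succ_descFactorial_succ, mul_comm]

theorem prod_Ioc_sub_self_eq_factorial (a k : ℕ) : ∏ l ∈ Ioc a (a + k), (l - a) = k ! := by
  induction k with
  | zero => simp
  | succ k ih =>
    rw [← add_assoc, prod_Ioc_succ_top (by omega), ih, Nat.factorial_succ,
      show a + k + 1 - a = k + 1 by omega, mul_comm]

theorem prod_Ioc_rev_sub_eq_factorial (a k : ℕ) :
    ∏ l ∈ Ioc a (a + k), (a + k + 1 - l) = k ! := by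
  induction k generalizing a with
  | zero => simp
  | succ k ih =>
    rw [← insert_Ioc_add_one_left_eq_Ioc (by omega), prod_insert (by simp),
      show a + (k + 1) = a + 1 + k by omega, ih, Nat.factorial_succ,
      show a + 1 + k + 1 - (a + 1) = k + 1 by omega]

theorem prod_Ioc_erase_sub_eq_neg_one_pow_mul_factorial {R : Type*} [CommRing R] {a k i : ℕ}
    (hi : i ∈ Icc 1 k) :
    ∏ l ∈ (Ioc a (a + k)).erase (a + i), ((l : R) - (a + i : ℕ)) =
      (-1) ^ (i - 1) * (i - 1)! * (k - i)! := by
  rw [mem_Icc] at hi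
  obtain ⟨p, q, rfl, rfl⟩ : ∃ p q, i = p + 1 ∧ k = p + 1 + q :=
    ⟨i - 1, k - i, by omega, by omega⟩
  have hsplit : (Ioc a (a + (p + 1 + q))).erase (a + (p + 1)) =
      Ioc a (a + p) ∪ Ioc (a + (p + 1)) (a + (p + 1) + q) := by
    ext; simp; omega
  have below : ∏ l ∈ Ioc a (a + p), ((l : R) - (a + (p + 1) : ℕ)) = (-1) ^ p * p ! := by
    rw [← prod_Ioc_rev_sub_eq_factorial a p, Nat.cast_prod,
      show (-1 : R) ^ p = (-1) ^ #(Ioc a (a + p)) by simp, ← prod_neg]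
    refine prod_congr rfl fun l hl => ?_
    rw [mem_Ioc] at hl
    rw [Nat.cast_sub (by omega)]
    push_cast
    ring
  have above :
      ∏ l ∈ Ioc (a + (p + 1)) (a + (p + 1) + q), ((l : R) - (a + (p + 1) : ℕ)) = q ! := by
    rw [← prod_Ioc_sub_self_eq_factorial, Nat.cast_prod]
    refine prod_congr rfl fun l hl => ?_
    rw [mem_Ioc] at hl
    rw [Nat.cast_sub (by omega)]
  have hdisj : Disjoint (Ioc a (a + p)) (Ioc (a + (p + 1)) (a + (p + 1) + q)) :=
    disjoint_left.2 fun l h₁ h₂ => by rw [mem_Ioc] at h₁ h₂; omega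
  rw [hsplit, prod_union hdisj, below, above, add_tsub_cancel_right, add_tsub_cancel_left]

theorem prod_Ioc_erase_sq_div_sq_sub_sq {K : Type*} [Field K] [CharZero K] {j k i : ℕ}
    (hkj : k ≤ j) (hi : i ∈ Icc 1 k) :
    ∏ l ∈ (Ioc (j - k) j).erase (j - k + i),
        (l : K) ^ 2 / ((l : K) ^ 2 - ((j - k + i : ℕ) : K) ^ 2) =
      2 * (-1 : K) ^ (i + 1) * (j.descFactorial k : K) ^ 2 /
        ((i - 1)! * (k - i)! * (2 * j - k + i).descFactorial k * ((j - k + i : ℕ) : K)) := by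
  obtain ⟨n, rfl⟩ := Nat.exists_eq_add_of_le' hkj
  rw [Nat.add_sub_cancel, show 2 * (n + k) - k + i = n + k + (n + i) by omega]
  obtain ⟨hi1, hik⟩ := mem_Icc.1 hi
  set m := n + i with hm_def
  have hm : m ∈ Ioc n (n + k) := mem_Ioc.2 ⟨by omega, by omega⟩
  have hm0 : (m : K) ≠ 0 := Nat.cast_ne_zero.2 (by omega)
  have hdesc : ((n + k + m).descFactorial k : K) ≠ 0 := by
    rw [Nat.cast_ne_zero, Ne, Nat.descFactorial_eq_zero_iff_lt]; omega
  have prod_id : ∏ l ∈ (Ioc n (n + k)).erase m, (l : K) = (n + k).descFactorial k / m := by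
    rw [eq_div_iff hm0, prod_erase_mul _ (fun l : ℕ => (l : K)) hm]
    simpa using congrArg (Nat.cast (R := K)) (prod_Ioc_add_eq_descFactorial n k 0)
  have prod_add : ∏ l ∈ (Ioc n (n + k)).erase m, ((l : K) + m) =
      (n + k + m).descFactorial k / (2 * m) := by
    rw [eq_div_iff (mul_ne_zero two_ne_zero hm0), ← prod_Ioc_add_eq_descFactorial n k m,
      Nat.cast_prod, ← prod_erase_mul _ _ hm]
    push_cast
    ring
  calc ∏ l ∈ (Ioc n (n + k)).erase m, (l : K) ^ 2 / ((l : K) ^ 2 - (m : K) ^ 2)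
      = (∏ l ∈ (Ioc n (n + k)).erase m, (l : K)) ^ 2 /
          ((∏ l ∈ (Ioc n (n + k)).erase m, ((l : K) - m)) *
            ∏ l ∈ (Ioc n (n + k)).erase m, ((l : K) + m)) := by
        rw [← prod_mul_distrib, ← prod_pow, ← prod_div_distrib]
        exact prod_congr rfl fun l _ => by ring
    _ = _ := by
        rw [prod_id, prod_add, hm_def, prod_Ioc_erase_sub_eq_neg_one_pow_mul_factorial hi,
          ← hm_def]
        obtain ⟨p, rfl⟩ : ∃ p, i = p + 1 := ⟨i - 1, by omega⟩
        rw [Nat.add_sub_cancel, show (-1 : K) ^ (p + 1 + 1) = ((-1) ^ p)⁻¹ by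
          rw [← inv_pow, inv_neg_one]; ring]
        field_simp

theorem richardson_eq_eval_zero_interpolate (T : ℕ → ℕ → ℝ)
    (hTrec : ∀ j k : ℕ, 1 ≤ k → k ≤ j - 1 →
      T j (k + 1) = T j k + (T j k - T (j - 1) k) / ((1 - (k : ℝ) / j) ^ 2 - 1))
    {j k : ℕ} (hk : 1 ≤ k) (hkj : k ≤ j) :
    T j k = (Lagrange.interpolate (Ioc (j - k) j) (fun m : ℕ => (m : ℝ) ^ 2)
      (fun m => T m 1)).eval 0 := by
  induction k, hk using Nat.le_induction generalizing j with
  | base =>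
    rw [show Ioc (j - 1) j = {j} by ext; simp; omega, Lagrange.interpolate_singleton, eval_C]
  | succ k hk ih =>
    have hinj : Set.InjOn (fun m : ℕ => (m : ℝ) ^ 2) (Ioc (j - (k + 1)) j) :=
      fun a _ b _ hab => by simpa using hab
    have hj0 : (j : ℝ) ≠ 0 := by rw [Nat.cast_ne_zero]; omega
    rw [hTrec j k hk (by omega), Lagrange.eval_zero_interpolate_neville hinj
      (i := j - k) (j := j) (by simp; omega) (by simp; omega) (by omega) (by positivity),
      show (Ioc (j - (k + 1)) j).erase (j - k) = Ioc (j - k) j by ext; simp; omega,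
      show (Ioc (j - (k + 1)) j).erase j = Ioc (j - 1 - k) (j - 1) by ext; simp; omega,
      ← ih (by omega), ← ih (by omega), one_sub_div hj0, div_pow, Nat.cast_sub (by omega)]

theorem richardson_closed_form_general
    (T : ℕ → ℕ → ℝ)
    (hTrec : ∀ j k : ℕ, 1 ≤ k → k ≤ j - 1 →
      T j (k + 1) = T j k + (T j k - T (j - 1) k) / ((1 - (k : ℝ) / j) ^ 2 - 1)) :
    ∀ j k : ℕ, 1 ≤ k → k ≤ j →
      T j k = ∑ i ∈ Finset.Icc 1 k,
        (2 * (-1 : ℝ) ^ (i + 1) * ((j.descFactorial k : ℝ)) ^ 2) /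
          ((((i - 1).factorial : ℝ)) * ((k - i).factorial) *
            (((2 * j - k + i).descFactorial k : ℝ)) * ((j - k + i : ℕ) : ℝ)) *
          T (j - k + i) 1 := by
  intro j k hk hkj
  have hnodes : Ioc (j - k) j = (Icc 1 k).map (addLeftEmbedding (j - k)) := by
    rw [map_add_left_Icc, Nat.sub_add_cancel hkj, Icc_add_one_left_eq_Ioc]
  rw [richardson_eq_eval_zero_interpolate T hTrec hk hkj, Lagrange.eval_zero_interpolate, hnodes,
    sum_map, ← hnodes]
  refine sum_congr rfl fun i hi => ?_
  rw [addLeftEmbedding_apply, mul_comm, prod_Ioc_erase_sq_div_sq_sub_sq hkj hi]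

/-- Closed-form expression for the entries of the Richardson extrapolation table
built from central differences. `(n)_k` is the falling factorial `Nat.descFactorial`. -/
theorem richardson_closed_form
    (y : ℝ → ℝ) (h : ℝ) (hh : 0 < h) (T : ℕ → ℕ → ℝ)
    (hT1 : ∀ j : ℕ, 1 ≤ j → T j 1 = (y (j * h) - y (-(j * h))) / (2 * j * h))
    (hTrec : ∀ j k : ℕ, 1 ≤ k → k ≤ j - 1 →
      T j (k + 1) = T j k + (T j k - T (j - 1) k) / ((1 - (k : ℝ) / j) ^ 2 - 1)) :
    ∀ j k : ℕ, 1 ≤ k → k ≤ j →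
      T j k = ∑ i ∈ Finset.Icc 1 k,
        (2 * (-1 : ℝ) ^ (i + 1) * ((j.descFactorial k : ℝ)) ^ 2) /
          ((((i - 1).factorial : ℝ)) * ((k - i).factorial) *
            (((2 * j - k + i).descFactorial k : ℝ)) * ((j - k + i : ℕ) : ℝ)) *
          T (j - k + i) 1 :=
  richardson_closed_form_general T hTrec
end

section
/- The diagonal entries of the Richardson extrapolation table equal the symmetric central-difference approximation using 2m points: T_{m,m} = \sum_{j=1}^m \frac{(-1)^{j+1} (m!)^2}{j h (m-j)! (m+j)!} (y(jh) - y(-jh)). -/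
/-!
Since `(1 - k/j)² - 1 = ((j - k)² - j²) / j²`, the recurrence for `T` is Neville's scheme for
evaluating at `0` the polynomial interpolating the values `T l 1` at the nodes `l²`: the entry
`T j k` uses the nodes `l²` with `j - k < l ≤ j`. So `T m m` is the Lagrange extrapolation
`∑ᵢ T i 1 · ∏_{l ≠ i} l² / (l² - i²)`, and splitting `l² - i² = (l - i)(l + i)` turns each weight
into ratios of factorials, `2 (-1)^(i+1) (m!)² / ((m - i)! (m + i)!)`.
-/

open Finset Polynomial Nat

namespace Lagrange

variable {F ι : Type*} [Field F] [DecidableEq ι] {s : Finset ι} {v : ι → F} {i j : ι}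

theorem eval_basis (x : F) :
    (Lagrange.basis s v i).eval x = ∏ l ∈ s.erase i, (x - v l) / (v i - v l) := by
  simp only [Lagrange.basis, basisDivisor, eval_prod, eval_mul, eval_C, eval_sub, eval_X]
  exact prod_congr rfl fun _ _ => inv_mul_eq_div _ _

theorem eval_interpolate (r : ι → F) (x : F) :
    (interpolate s v r).eval x = ∑ i ∈ s, r i * ∏ l ∈ s.erase i, (x - v l) / (v i - v l) := by
  simp only [interpolate_apply, eval_finsetSum, eval_mul, eval_C, eval_basis]

theorem eval_interpolate_eq_neville (hvs : Set.InjOn v s) (hi : i ∈ s) (hj : j ∈ s)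
    (hij : i ≠ j) (r : ι → F) (x : F) :
    (interpolate s v r).eval x =
      ((x - v j) * (interpolate (s.erase j) v r).eval x -
        (x - v i) * (interpolate (s.erase i) v r).eval x) / (v i - v j) := by
  have hij' : v i - v j ≠ 0 := sub_ne_zero.mpr (hvs.ne hi hj hij)
  have hji' : v j - v i ≠ 0 := sub_ne_zero.mpr (hvs.ne hj hi hij.symm)
  rw [interpolate_eq_add_interpolate_erase r hvs hi hj hij]
  simp only [basisDivisor, eval_add, eval_mul, eval_C, eval_sub, eval_X]
  field_simp
  ring

end Lagrange

open Lagrange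

theorem natCast_sq_injective : Function.Injective fun l : ℕ => (l : ℝ) ^ 2 := fun a b hab => by
  simpa using hab

theorem richardson_table_eq_eval_interpolate (T : ℕ → ℕ → ℝ)
    (hTrec : ∀ j k : ℕ, 1 ≤ k → k ≤ j - 1 →
      T j (k + 1) = T j k + (T j k - T (j - 1) k) / ((1 - (k : ℝ) / j) ^ 2 - 1))
    {k : ℕ} (hk : 1 ≤ k) :
    ∀ j, k ≤ j → T j k =
      (interpolate (Icc (j + 1 - k) j) (fun l : ℕ => (l : ℝ) ^ 2) (fun l => T l 1)).eval 0 := by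
  induction k, hk using Nat.le_induction with
  | base =>
    intro j _
    simp
  | succ k hk ih =>
    intro j hkj
    have hvs := natCast_sq_injective.injOn (s := Icc (j - k) j)
    have hlow : (Icc (j - k) j).erase (j - k) = Icc (j + 1 - k) j := by ext; simp; omega
    have hup : (Icc (j - k) j).erase j = Icc (j - 1 + 1 - k) (j - 1) := by ext; simp; omega
    have hj : (j : ℝ) ≠ 0 := by norm_cast; omega
    have hjk : ((j - k : ℕ) : ℝ) ^ 2 - (j : ℝ) ^ 2 ≠ 0 :=
      sub_ne_zero.mpr (natCast_sq_injective.ne (by omega))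
    rw [show j + 1 - (k + 1) = j - k by omega,
      eval_interpolate_eq_neville hvs (i := j - k) (j := j) (by simp) (by simp) (by omega),
      hTrec j k hk (by omega), ih j (by omega), ih (j - 1) (by omega), hlow, hup]
    push_cast [Nat.cast_sub (show k ≤ j by omega)] at hjk ⊢
    field_simp
    ring

theorem prod_Icc_one_id_eq_factorial (m : ℕ) : ∏ l ∈ Icc 1 m, l = m ! := by
  rw [← Ico_add_one_right_eq_Icc, prod_Ico_id_eq_factorial]

theorem mul_prod_Icc_erase_natCast {m i : ℕ} (hi : i ∈ Icc 1 m) :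
    (i : ℝ) * ∏ l ∈ (Icc 1 m).erase i, (l : ℝ) = m ! := by
  rw [mul_prod_erase _ (fun l : ℕ => (l : ℝ)) hi, ← Nat.cast_prod, prod_Icc_one_id_eq_factorial]

theorem factorial_mul_prod_Icc_erase_add {m i : ℕ} (hi : i ∈ Icc 1 m) :
    (i ! : ℝ) * (2 * i * ∏ l ∈ (Icc 1 m).erase i, ((l : ℝ) + i)) = (m + i)! := by
  have hprod : ∏ l ∈ Icc 1 m, (l + i) = (i + 1).ascFactorial m := by
    rw [← Ico_add_one_right_eq_Icc, prod_Ico_eq_prod_range, ascFactorial_eq_prod_range]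
    exact prod_congr (by simp) fun k _ => by ring
  rw [two_mul, mul_prod_erase _ (fun l : ℕ => (l : ℝ) + i) hi, add_comm m,
    ← factorial_mul_ascFactorial, ← hprod]
  push_cast
  rfl

theorem prod_Ico_one_natCast_sub_succ (n : ℕ) :
    ∏ l ∈ Ico 1 (n + 1), ((l : ℝ) - (n + 1)) = (-1) ^ n * n ! := by
  have hterm : ∀ l ∈ Ico 1 (n + 1), (l : ℝ) - (n + 1) = -((n + 1 - l : ℕ) : ℝ) := by
    intro l hl
    rw [Nat.cast_sub (mem_Ico.mp hl).2.le]
    push_cast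
    ring
  have hfact : ∏ l ∈ Ico 1 (n + 1), (n + 1 - l) = n ! := by
    simpa using prod_Ico_reflect id 1 (Nat.le_succ (n + 1))
  rw [prod_congr rfl hterm, prod_neg, ← Nat.cast_prod, hfact]
  simp

theorem prod_Icc_erase_sub {m i : ℕ} (hi : 1 ≤ i) (him : i ≤ m) :
    ∏ l ∈ (Icc 1 m).erase i, ((l : ℝ) - i) = (-1) ^ (i + 1) * (i - 1)! * (m - i)! := by
  induction m, him using Nat.le_induction with
  | base =>
    obtain ⟨n, rfl⟩ : ∃ n, i = n + 1 := ⟨i - 1, by omega⟩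
    push_cast
    rw [Icc_erase_right, prod_Ico_one_natCast_sub_succ]
    simp [pow_succ]
  | succ m him ih =>
    have hins : (Icc 1 (m + 1)).erase i = insert (m + 1) ((Icc 1 m).erase i) := by
      ext; simp; omega
    rw [hins, prod_insert (by simp), ih, show m + 1 - i = (m - i) + 1 by omega, factorial_succ]
    push_cast [Nat.cast_sub him]
    ring

theorem prod_Icc_erase_sq_div_sq_sub_sq {m i : ℕ} (hi : 1 ≤ i) (him : i ≤ m) :
    ∏ l ∈ (Icc 1 m).erase i, (l : ℝ) ^ 2 / ((l : ℝ) ^ 2 - i ^ 2) =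
      2 * (-1) ^ (i + 1) * (m ! : ℝ) ^ 2 / ((m - i)! * (m + i)!) := by
  have hmem : i ∈ Icc 1 m := mem_Icc.mpr ⟨hi, him⟩
  have hsplit : ∀ l : ℕ, (l : ℝ) ^ 2 - i ^ 2 = ((l : ℝ) - i) * ((l : ℝ) + i) := fun l => by ring
  simp only [hsplit, prod_div_distrib, prod_mul_distrib, prod_pow, prod_Icc_erase_sub hi him]
  rw [← mul_prod_Icc_erase_natCast hmem, ← factorial_mul_prod_Icc_erase_add hmem,
    ← Nat.mul_factorial_pred (by omega : i ≠ 0)]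
  have hp : ∏ l ∈ (Icc 1 m).erase i, ((l : ℝ) + i) ≠ 0 :=
    prod_ne_zero_iff.mpr fun l _ => by positivity
  have hsign : ((-1 : ℝ) ^ (i + 1)) ^ 2 = 1 := by rw [← pow_mul, pow_mul', neg_one_sq, one_pow]
  push_cast
  field_simp
  rw [hsign, mul_one]

theorem richardson_diagonal_eq_central_difference_general
    (y : ℝ → ℝ) (h : ℝ) (T : ℕ → ℕ → ℝ)
    (hT1 : ∀ j : ℕ, 1 ≤ j → T j 1 = (y (j * h) - y (-(j * h))) / (2 * j * h))
    (hTrec : ∀ j k : ℕ, 1 ≤ k → k ≤ j - 1 →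
      T j (k + 1) = T j k + (T j k - T (j - 1) k) / ((1 - (k : ℝ) / j) ^ 2 - 1)) :
    ∀ m : ℕ, 1 ≤ m →
      T m m = ∑ j ∈ Finset.Icc 1 m,
        ((-1 : ℝ) ^ (j + 1) * (m.factorial : ℝ) ^ 2) /
            ((j : ℝ) * h * ((m - j).factorial : ℝ) * ((m + j).factorial : ℝ)) *
          (y (j * h) - y (-(j * h))) := by
  intro m hm
  rw [richardson_table_eq_eval_interpolate T hTrec hm m le_rfl, show m + 1 - m = 1 by omega,
    eval_interpolate]
  refine sum_congr rfl fun i hi => ?_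
  obtain ⟨hi1, him⟩ := mem_Icc.mp hi
  have hweight : ∏ l ∈ (Icc 1 m).erase i, (0 - (l : ℝ) ^ 2) / ((i : ℝ) ^ 2 - l ^ 2) =
      ∏ l ∈ (Icc 1 m).erase i, (l : ℝ) ^ 2 / ((l : ℝ) ^ 2 - i ^ 2) :=
    prod_congr rfl fun _ _ => by rw [zero_sub, ← neg_sub, neg_div_neg_eq]
  rw [hweight, prod_Icc_erase_sq_div_sq_sub_sq hi1 him, hT1 i hi1]
  ring

/-- The diagonal entries of the Richardson extrapolation table equal the symmetric
central-difference approximation using `2m` points. -/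
theorem richardson_diagonal_eq_central_difference
    (y : ℝ → ℝ) (h : ℝ) (hh : 0 < h) (T : ℕ → ℕ → ℝ)
    (hT1 : ∀ j : ℕ, 1 ≤ j → T j 1 = (y (j * h) - y (-(j * h))) / (2 * j * h))
    (hTrec : ∀ j k : ℕ, 1 ≤ k → k ≤ j - 1 →
      T j (k + 1) = T j k + (T j k - T (j - 1) k) / ((1 - (k : ℝ) / j) ^ 2 - 1)) :
    ∀ m : ℕ, 1 ≤ m →
      T m m = ∑ j ∈ Finset.Icc 1 m,
        ((-1 : ℝ) ^ (j + 1) * (m.factorial : ℝ) ^ 2) /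
            ((j : ℝ) * h * ((m - j).factorial : ℝ) * ((m + j).factorial : ℝ)) *
          (y (j * h) - y (-(j * h))) :=
  richardson_diagonal_eq_central_difference_general y h T hT1 hTrec
end

section
/- The central difference formula is exact for low-degree polynomials: if y is a polynomial of degree at most 2m, then D_m y(0) = y'(0), where D_m y(0) = \sum_{j=1}^m \frac{(-1)^{j+1}(m!)^2}{j h (m-j)!(m+j)!}(y(jh) - y(-jh)). -/
/-!
Write `P = P(0) + X * R` with `R = P.divX`, so that `R(0) = P'(0)`, `deg R < 2m` and
`P(jh) - P(-jh) = jh (R(jh) + R(-jh))`. The `2m`-th forward difference of `x ↦ R(xh)` at `-m`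
vanishes; folding that binomial sum about its middle term gives
`C(2m,m) R(0) + ∑_{j=1}^m (-1)^j C(2m,m+j) (R(jh) + R(-jh)) = 0`, and the weights of `D_m` are
exactly `-(-1)^j C(2m,m+j) / (jh C(2m,m))`, since `(m!)² / ((m-j)! (m+j)!) = C(2m,m+j) / C(2m,m)`.
-/

open Polynomial Finset Nat

theorem sum_range_two_mul_add_one_eq_add_sum_Icc {M : Type*} [AddCommMonoid M] (m : ℕ)
    (g : ℕ → M) :
    ∑ k ∈ range (2 * m + 1), g k = g m + ∑ j ∈ Icc 1 m, (g (m - j) + g (m + j)) := by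
  rw [show 2 * m + 1 = (m + 1) + m by ring, sum_range_add, sum_range_succ, ← sum_range_reflect,
    ← Ico_add_one_right_eq_Icc, sum_Ico_eq_sum_range, Nat.add_sub_cancel, sum_add_distrib]
  simp only [Nat.sub_sub, ← add_assoc]
  abel

theorem choose_div_choose_eq {K : Type*} [Field K] [CharZero K] {m j : ℕ} (hj : j ≤ m) :
    ((2 * m).choose (m + j) : K) / (2 * m).choose m = (m ! : K) ^ 2 / ((m - j)! * (m + j)!) := by
  have h2m : ((2 * m)! : K) ≠ 0 := cast_ne_zero.mpr (factorial_ne_zero _)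
  rw [cast_choose K (by omega), cast_choose K (by omega),
    show 2 * m - (m + j) = m - j by omega, show 2 * m - m = m by omega]
  field_simp

namespace Polynomial

variable {R : Type*} [CommRing R]

theorem eval_divX_zero (p : R[X]) : p.divX.eval 0 = p.derivative.eval 0 := by
  simp [← coeff_zero_eq_eval_zero, coeff_divX, coeff_derivative]

theorem eval_sub_eval_neg (p : R[X]) (x : R) :
    p.eval x - p.eval (-x) = x * (p.divX.eval x + p.divX.eval (-x)) := by
  conv_lhs => rw [← divX_mul_X_add p]
  simp only [eval_add, eval_mul, eval_X, eval_C]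
  ring

theorem choose_mul_eval_zero_add_sum_eq_zero {P : R[X]} {m : ℕ} (hP : P.natDegree < 2 * m)
    (x : R) :
    (2 * m).choose m * P.eval 0 +
      ∑ j ∈ Icc 1 m, (-1) ^ j * (2 * m).choose (m + j) * (P.eval (j * x) + P.eval (-(j * x)))
      = 0 := by
  set Q := P.comp (C x * X)
  have hQ : Q.natDegree < 2 * m := natDegree_comp_le.trans_lt <| by
    nlinarith [(natDegree_C_mul_le x X).trans natDegree_X_le]
  have h0 := congrFun (fwdDiff_iter_eq_zero_of_degree_lt hQ) (-m)
  rw [fwdDiff_iter_eq_sum_shift, sum_range_two_mul_add_one_eq_add_sum_Icc] at h0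
  -- the expansion carries the signs `(-1)^(2m-k)`; multiplying by `(-1)^m` centres them
  convert congrArg ((-1 : R) ^ m * ·) h0 using 1
  · rw [mul_add, mul_sum]
    congr 1
    · rw [two_mul, Nat.add_sub_cancel]
      simp [Q, eval_comp, ← mul_assoc, ← pow_add, ← two_mul, pow_mul]
    · refine sum_congr rfl fun j hj => ?_
      obtain ⟨i, rfl⟩ := Nat.exists_eq_add_of_le (mem_Icc.mp hj).2
      rw [show 2 * (j + i) - (j + i - j) = i + 2 * j by omega,
        show 2 * (j + i) - (j + i + j) = i by omega, Nat.add_sub_cancel_left,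
        choose_symm_of_eq_add (show 2 * (j + i) = i + (j + i + j) by omega)]
      simp [Q, eval_comp, zsmul_eq_mul, pow_add, pow_mul]
      ring_nf
      simp [pow_mul']
  · simp

end Polynomial

/-- The symmetric central-difference formula using `2m` points is exact
for polynomials of degree at most `2m`. -/
theorem central_difference_exact_on_polynomials
    (m : ℕ) (hm : 1 ≤ m) (h : ℝ) (hh : 0 < h)
    (P : Polynomial ℝ) (hdeg : P.natDegree ≤ 2 * m) :
    (∑ j ∈ Finset.Icc 1 m,
        ((-1 : ℝ) ^ (j + 1) * (m.factorial : ℝ) ^ 2) /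
            ((j : ℝ) * h * ((m - j).factorial : ℝ) * ((m + j).factorial : ℝ)) *
          (P.eval ((j : ℝ) * h) - P.eval (-((j : ℝ) * h))))
      = P.derivative.eval 0 := by
  have hR : P.divX.natDegree < 2 * m := by rw [natDegree_divX_eq_natDegree_tsub_one]; omega
  have key := P.divX.choose_mul_eval_zero_add_sum_eq_zero hR h
  have hC : ((2 * m).choose m : ℝ) ≠ 0 := cast_ne_zero.mpr (choose_pos (by omega)).ne'
  calc _ = ∑ j ∈ Icc 1 m, -((-1) ^ j * (2 * m).choose (m + j) *
        (P.divX.eval (j * h) + P.divX.eval (-(j * h)))) / (2 * m).choose m := by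
        refine sum_congr rfl fun j hj => ?_
        have hj0 : (j : ℝ) ≠ 0 := cast_ne_zero.mpr (by have := (mem_Icc.mp hj).1; omega)
        have hh0 : h ≠ 0 := hh.ne'
        rw [P.eval_sub_eval_neg]
        conv_rhs => rw [neg_div, mul_div_right_comm, mul_div_assoc,
          choose_div_choose_eq (mem_Icc.mp hj).2]
        field_simp
        ring
    _ = P.derivative.eval 0 := by
      rw [← sum_div, sum_neg_distrib, div_eq_iff hC, ← P.eval_divX_zero]
      linear_combination -key
end

section
/- With K_m(z) = (-1)^{m+1}(m!)² h^{2m} / (z²(z²-h²)⋯(z²-(mh)²)) and ρ, h > 0, the bound |K_m(iρ)| ≤ (π/(ρ h sinh(πρ/h))) exp(ρ²/(h² m)) holds for every integer m ≥ 1. -/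
/-!
Put `x = ρ / h`. On the imaginary axis the kernel is `K_m(iρ) = 1 / (ρ² ∏_{j ≤ m} (1 + x²/j²))`,
the reciprocal of a partial Euler product of `sinh (π x) / (π x)`. The missing tail is
`∏_{j > m} (1 + x²/j²) ≤ exp (x² ∑_{j > m} 1/j²) ≤ exp (x²/m)`, so
`sinh (π x) ≤ π x ∏_{j ≤ m} (1 + x²/j²) exp (x²/m)`, which rearranges to the bound.
-/

open Complex Filter Finset Topology
open scoped Real

noncomputable def centralDiffKernel (h : ℝ) (m : ℕ) (z : ℂ) : ℂ :=
  (-1 : ℂ) ^ (m + 1) * (m.factorial : ℂ) ^ 2 * (h : ℂ) ^ (2 * m) /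
    (z ^ 2 * ∏ j ∈ Icc 1 m, (z ^ 2 - ((j : ℂ) * h) ^ 2))

lemma prod_Icc_sq_sub_sq_eq {c : ℂ} (hc : c ≠ 0) (m : ℕ) (z : ℂ) :
    ∏ j ∈ Icc 1 m, (z ^ 2 - ((j : ℂ) * c) ^ 2) =
      (-1) ^ m * (m.factorial : ℂ) ^ 2 * c ^ (2 * m) *
        ∏ j ∈ range m, (1 - (z / c) ^ 2 / ((j : ℂ) + 1) ^ 2) := by
  have factor : ∀ j ∈ range m, z ^ 2 - (((1 + j : ℕ) : ℂ) * c) ^ 2 =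
      (-1) * (((j : ℂ) + 1) ^ 2 * c ^ 2) * (1 - (z / c) ^ 2 / ((j : ℂ) + 1) ^ 2) := by
    intro j _
    have : (j : ℂ) + 1 ≠ 0 := by exact_mod_cast Nat.succ_ne_zero j
    push_cast
    field_simp
    ring
  have factorial_eq : ∏ j ∈ range m, ((j : ℂ) + 1) = m.factorial := by
    rw [← prod_range_add_one_eq_factorial]; push_cast; rfl
  rw [← Ico_add_one_right_eq_Icc, prod_Ico_eq_prod_range, Nat.add_sub_cancel,
    prod_congr rfl factor, prod_mul_distrib, prod_mul_distrib, prod_mul_distrib, prod_const,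
    card_range, prod_const, card_range, prod_pow, factorial_eq]
  ring

lemma centralDiffKernel_eq_neg_inv {h : ℝ} (hh : h ≠ 0) (m : ℕ) (z : ℂ) :
    centralDiffKernel h m z = -(z ^ 2 * ∏ j ∈ range m, (1 - (z / h) ^ 2 / ((j : ℂ) + 1) ^ 2))⁻¹ := by
  have hh' : (h : ℂ) ≠ 0 := ofReal_ne_zero.2 hh
  have hfact : (m.factorial : ℂ) ≠ 0 := Nat.cast_ne_zero.2 m.factorial_ne_zero
  rw [centralDiffKernel, prod_Icc_sq_sub_sq_eq hh', pow_succ, pow_mul]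
  field_simp

lemma centralDiffKernel_I_mul_ofReal {h : ℝ} (hh : h ≠ 0) (m : ℕ) (ρ : ℝ) :
    centralDiffKernel h m (I * ρ) =
      ((ρ ^ 2 * ∏ j ∈ range m, (1 + (ρ / h) ^ 2 / ((j : ℝ) + 1) ^ 2))⁻¹ : ℝ) := by
  have hsq : ∀ c : ℝ, (I * c) ^ 2 = -((c : ℂ) ^ 2) := fun c => by rw [mul_pow, I_sq]; ring
  rw [centralDiffKernel_eq_neg_inv hh, mul_div_assoc, ← ofReal_div, hsq, hsq]
  push_cast
  simp only [neg_div, sub_neg_eq_add, neg_mul, inv_neg, neg_neg]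

lemma norm_centralDiffKernel_I_mul_ofReal {h : ℝ} (hh : h ≠ 0) (m : ℕ) (ρ : ℝ) :
    ‖centralDiffKernel h m (I * ρ)‖ =
      (ρ ^ 2 * ∏ j ∈ range m, (1 + (ρ / h) ^ 2 / ((j : ℝ) + 1) ^ 2))⁻¹ := by
  rw [centralDiffKernel_I_mul_ofReal hh, norm_real, Real.norm_of_nonneg (by positivity)]

lemma Real.tendsto_euler_sinh_prod (x : ℝ) :
    Tendsto (fun n : ℕ => π * x * ∏ j ∈ range n, (1 + x ^ 2 / ((j : ℝ) + 1) ^ 2))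
      atTop (𝓝 (Real.sinh (π * x))) := by
  have euler := (continuous_im.tendsto _).comp (Complex.tendsto_euler_sin_prod (x * I))
  have sq_eq : ((x : ℂ) * I) ^ 2 = -((x : ℂ) ^ 2) := by rw [mul_pow, I_sq]; ring
  convert euler using 1
  · ext n
    simp only [Function.comp_apply, sq_eq, neg_div, sub_neg_eq_add, ← mul_assoc]
    norm_cast
    rw [mul_right_comm _ I, ← ofReal_mul, mul_I_im, ofReal_re]
  · rw [← mul_assoc, ← ofReal_mul, sin_mul_I, ← ofReal_sinh, mul_I_im, ofReal_re]

lemma sum_Ico_inv_add_one_sq_le {m n : ℕ} (hm : 0 < m) (hmn : m ≤ n) :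
    ∑ j ∈ Ico m n, (((j : ℝ) + 1) ^ 2)⁻¹ ≤ (m : ℝ)⁻¹ - (n : ℝ)⁻¹ := by
  induction n, hmn using Nat.le_induction with
  | base => simp
  | succ n hmn ih =>
    have hn : (0 : ℝ) < n := by exact_mod_cast hm.trans_le hmn
    have step : (((n : ℝ) + 1) ^ 2)⁻¹ ≤ (n : ℝ)⁻¹ - ((n : ℝ) + 1)⁻¹ := by
      rw [inv_sub_inv hn.ne' (by positivity), add_sub_cancel_left, one_div]
      exact inv_anti₀ (by positivity) (by nlinarith)
    rw [sum_Ico_succ_top hmn]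
    push_cast
    linarith

lemma prod_Ico_one_add_sq_div_le_exp (x : ℝ) {m n : ℕ} (hm : 0 < m) (hmn : m ≤ n) :
    ∏ j ∈ Ico m n, (1 + x ^ 2 / ((j : ℝ) + 1) ^ 2) ≤ Real.exp (x ^ 2 / m) := by
  refine (Real.prod_one_add_le_exp_sum _ fun j => by positivity).trans (Real.exp_le_exp.2 ?_)
  calc ∑ j ∈ Ico m n, x ^ 2 / ((j : ℝ) + 1) ^ 2
      = x ^ 2 * ∑ j ∈ Ico m n, (((j : ℝ) + 1) ^ 2)⁻¹ := by simp only [mul_sum, div_eq_mul_inv]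
    _ ≤ x ^ 2 * (m : ℝ)⁻¹ := by
        gcongr
        exact (sum_Ico_inv_add_one_sq_le hm hmn).trans (sub_le_self _ (by positivity))
    _ = x ^ 2 / m := (div_eq_mul_inv _ _).symm

lemma Real.sinh_pi_mul_le {x : ℝ} (hx : 0 ≤ x) {m : ℕ} (hm : 0 < m) :
    Real.sinh (π * x) ≤
      π * x * (∏ j ∈ range m, (1 + x ^ 2 / ((j : ℝ) + 1) ^ 2)) * Real.exp (x ^ 2 / m) := by
  refine le_of_tendsto (Real.tendsto_euler_sinh_prod x) ?_
  filter_upwards [eventually_ge_atTop m] with n hmn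
  rw [← prod_range_mul_prod_Ico _ hmn, ← mul_assoc]
  gcongr
  exact prod_Ico_one_add_sq_div_le_exp x hm hmn

/-- Bound on the error kernel at `z = iρ`:
`|K_m(iρ)| ≤ (π/(ρ h sinh(πρ/h))) exp(ρ²/(h²m))`. -/
theorem kernel_bound_at_i_rho (h ρ : ℝ) (hh : 0 < h) (hρ : 0 < ρ)
    (m : ℕ) (hm : 1 ≤ m) :
    ‖(((-1 : ℂ) ^ (m + 1) * (m.factorial : ℂ) ^ 2 * (h : ℂ) ^ (2 * m)) /
        ((I * ρ) ^ 2 * ∏ j ∈ Finset.Icc 1 m, ((I * ρ) ^ 2 - ((j : ℂ) * h) ^ 2)))‖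
      ≤ Real.pi / (ρ * h * Real.sinh (Real.pi * ρ / h)) *
          Real.exp (ρ ^ 2 / (h ^ 2 * m)) := by
  change ‖centralDiffKernel h m (I * ρ)‖ ≤ _
  have hsinh := Real.sinh_pi_mul_le (div_pos hρ hh).le hm
  rw [← mul_div_assoc, div_pow, div_div] at hsinh
  rw [norm_centralDiffKernel_I_mul_ofReal hh.ne', div_pow]
  set P := ∏ j ∈ range m, (1 + ρ ^ 2 / h ^ 2 / ((j : ℝ) + 1) ^ 2)
  set E := Real.exp (ρ ^ 2 / (h ^ 2 * m))
  have hP : 0 < P := by positivity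
  have hE : 0 < E := Real.exp_pos _
  have hsinh_pos : 0 < Real.sinh (π * ρ / h) := Real.sinh_pos_iff.2 (by positivity)
  calc (ρ ^ 2 * P)⁻¹ = π / (ρ * h * (π * ρ / h * P * E)) * E := by field_simp
    _ ≤ π / (ρ * h * Real.sinh (π * ρ / h)) * E := by gcongr
end

section
/- Let y be holomorphic on the strip {z ∈ ℂ : |Im z| < ρ'} for some ρ' > ρ > 0 and bounded on {|Im z| ≤ ρ}. Then for h > 0, m ≥ 1, the central-difference error admits the contour-integral representation D_m y(0) − y'(0) = (1/(2πi)) ∮_γ K_m(z) y(z) dz, where γ is a rectangular contour of height 2ρ enclosing the points −mh, …, mh, and K_m(z) = (-1)^{m+1}(m!)² h^{2m}/(z²(z²-h²)⋯(z²-(mh)²)). -/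
/-!
Away from its poles, `K_m` is a partial fraction in `z²`: by Lagrange's formula
for the nodes `(kh)²`, `K_m(z) = ∑_{k=0}^m c_k / (z² - (kh)²)` with `c_0 = -1` and
`c_k = 2kh · (-1)^{k+1} (m!)² / (kh (m-k)! (m+k)!)`. The Cauchy integral formula on rectangles
(Cauchy–Goursat applied to `dslope`, plus `∮ dz / (z - p) = 2πi` computed with branches of `log`)
gives `∮ y(z) / z² dz = 2πi y'(0)` and `∮ y(z) / (z² - p²) dz = 2πi (y(p) - y(-p)) / (2p)`;
summing these is exactly `2πi (D_m y(0) - y'(0))`.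
-/

open Complex intervalIntegral
open Finset
open scoped Interval Nat

theorem mul_integral_comp_eq_sub_of_hasDerivAt {f F : ℂ → ℂ} {S : Set ℂ} {γ : ℝ → ℂ} {v : ℂ}
    {a b : ℝ} (hγ : ∀ t, HasDerivAt γ v t) (hmaps : Set.MapsTo γ [[a, b]] S)
    (hf : ContinuousOn f S) (hF : ∀ t ∈ [[a, b]], HasDerivAt F (f (γ t)) (γ t)) :
    v * ∫ t in a..b, f (γ t) = F (γ b) - F (γ a) := by
  rw [← integral_const_mul]
  refine integral_eq_sub_of_hasDerivAt (f := fun t => F (γ t)) (fun t ht => ?_)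
    (ContinuousOn.intervalIntegrable ?_)
  · rw [mul_comm]
    exact (hF t ht).comp t (hγ t)
  · exact continuousOn_const.mul
      (hf.comp (continuous_iff_continuousAt.2 fun t => (hγ t).continuousAt).continuousOn hmaps)

theorem log_neg_of_im_pos {u : ℂ} (h : 0 < u.im) : log (-u) = log u - Real.pi * I := by
  rw [log, log, norm_neg, arg_neg_eq_arg_sub_pi_of_im_pos h]
  push_cast
  ring

theorem log_neg_of_im_neg {u : ℂ} (h : u.im < 0) : log (-u) = log u + Real.pi * I := by
  rw [log, log, norm_neg, arg_neg_eq_arg_add_pi_of_im_neg h]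
  push_cast
  ring

theorem inv_prod_sub_eq_sum_nodalWeight {F ι : Type*} [Field F] [DecidableEq ι] {s : Finset ι}
    {v : ι → F} {x : F} (hvs : Set.InjOn v s) (hs : s.Nonempty) (hx : ∀ i ∈ s, x ≠ v i) :
    (∏ i ∈ s, (x - v i))⁻¹ = ∑ i ∈ s, Lagrange.nodalWeight s v i * (x - v i)⁻¹ := by
  have h := congrArg (Polynomial.eval x) (Lagrange.sum_basis hvs hs)
  rw [Polynomial.eval_finsetSum, Polynomial.eval_one,
    sum_congr rfl fun i hi => Lagrange.eval_basis_not_at_node hi (hx i hi), ← mul_sum,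
    Lagrange.eval_nodal] at h
  exact (eq_inv_of_mul_eq_one_right h).symm

section Products

variable {m k : ℕ}

theorem range_add_one_eq_insert_Icc (m : ℕ) : range (m + 1) = insert 0 (Icc 1 m) := by
  ext j
  simp only [mem_range, mem_insert, mem_Icc]
  omega

theorem prod_erase_range_natCast_sub {R : Type*} [CommRing R] (hkm : k ≤ m) :
    ∏ j ∈ (range (m + 1)).erase k, ((k : R) - j) = (-1) ^ (m - k) * k ! * (m - k)! := by
  induction m, hkm using Nat.le_induction with
  | base =>
    rw [range_add_one, erase_insert notMem_range_self, Nat.sub_self, ← Nat.descFactorial_self,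
      Nat.descFactorial_eq_prod_range, Nat.cast_prod,
      prod_congr rfl fun j hj => Nat.cast_sub (mem_range.1 hj).le]
    simp
  | succ m hkm ih =>
    rw [range_add_one, erase_insert_of_ne (by omega), prod_insert (by simp), ih, Nat.succ_sub hkm,
      pow_succ, Nat.factorial_succ]
    push_cast [Nat.cast_sub hkm]
    ring

theorem two_mul_factorial_mul_prod_erase_range_add (hk : 0 < k) (hkm : k ≤ m) :
    2 * k ! * ∏ j ∈ (range (m + 1)).erase k, (k + j) = (k + m)! := by
  have hasc := Nat.factorial_mul_ascFactorial' k (m + 1) hk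
  rw [Nat.ascFactorial_eq_prod_range, ← mul_prod_erase _ _ (mem_range.2 (by omega : k < m + 1)),
    show k + (m + 1) - 1 = k + m by omega] at hasc
  rw [← hasc, ← Nat.mul_factorial_pred hk.ne']
  ring

theorem prod_erase_range_sq_sub_sq (h : ℂ) (hkm : k ≤ m) :
    ∏ j ∈ (range (m + 1)).erase k, (((k : ℂ) * h) ^ 2 - ((j : ℂ) * h) ^ 2) =
      (∏ j ∈ (range (m + 1)).erase k, ((k : ℂ) - j)) *
        (∏ j ∈ (range (m + 1)).erase k, ((k : ℂ) + j)) * h ^ (2 * m) := by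
  have hcard : #((range (m + 1)).erase k) = m := by
    simp [card_erase_of_mem, Nat.lt_succ_of_le hkm]
  calc _ = ∏ j ∈ (range (m + 1)).erase k, ((k : ℂ) - j) * ((k : ℂ) + j) * h ^ 2 :=
        prod_congr rfl fun j _ => by ring
    _ = _ := by rw [prod_mul_distrib, prod_mul_distrib, prod_const, hcard, pow_mul]

end Products

noncomputable def rectBoundaryIntegral (A B : ℝ) (f : ℂ → ℂ) : ℂ :=
  (∫ x in (-A)..A, f ((x : ℂ) - I * B)) + I * (∫ t in (-B)..B, f ((A : ℂ) + I * t))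
    - (∫ x in (-A)..A, f ((x : ℂ) + I * B)) - I * (∫ t in (-B)..B, f (-(A : ℂ) + I * t))

def rectBoundary (A B : ℝ) : Set ℂ :=
  (fun x : ℝ => (x : ℂ) - I * B) '' [[-A, A]] ∪ (fun t : ℝ => (A : ℂ) + I * t) '' [[-B, B]] ∪
    (fun x : ℝ => (x : ℂ) + I * B) '' [[-A, A]] ∪ (fun t : ℝ => -(A : ℂ) + I * t) '' [[-B, B]]

namespace rectBoundary

variable {A B : ℝ}

theorem mapsTo_bottom : Set.MapsTo (fun x : ℝ => (x : ℂ) - I * B) [[-A, A]] (rectBoundary A B) :=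
  fun x hx => Or.inl <| Or.inl <| Or.inl ⟨x, hx, rfl⟩

theorem mapsTo_right : Set.MapsTo (fun t : ℝ => (A : ℂ) + I * t) [[-B, B]] (rectBoundary A B) :=
  fun t ht => Or.inl <| Or.inl <| Or.inr ⟨t, ht, rfl⟩

theorem mapsTo_top : Set.MapsTo (fun x : ℝ => (x : ℂ) + I * B) [[-A, A]] (rectBoundary A B) :=
  fun x hx => Or.inl <| Or.inr ⟨x, hx, rfl⟩

theorem mapsTo_left : Set.MapsTo (fun t : ℝ => -(A : ℂ) + I * t) [[-B, B]] (rectBoundary A B) :=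
  fun t ht => Or.inr ⟨t, ht, rfl⟩

theorem hasDerivAt_bottom (x : ℝ) : HasDerivAt (fun x : ℝ => (x : ℂ) - I * B) 1 x := by
  simpa using (hasDerivAt_id x).ofReal_comp.sub_const (I * B)

theorem hasDerivAt_right (t : ℝ) : HasDerivAt (fun t : ℝ => (A : ℂ) + I * t) I t := by
  simpa using ((hasDerivAt_id t).ofReal_comp.const_mul I).const_add (A : ℂ)

theorem hasDerivAt_top (x : ℝ) : HasDerivAt (fun x : ℝ => (x : ℂ) + I * B) 1 x := by
  simpa using (hasDerivAt_id x).ofReal_comp.add_const (I * B)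

theorem hasDerivAt_left (t : ℝ) : HasDerivAt (fun t : ℝ => -(A : ℂ) + I * t) I t := by
  simpa using ((hasDerivAt_id t).ofReal_comp.const_mul I).const_add (-A : ℂ)

end rectBoundary

open rectBoundary

section Rectangle

variable {A B : ℝ} {f g : ℂ → ℂ} {U : Set ℂ} {p : ℂ}

theorem rectBoundary_subset_reProdIm : rectBoundary A B ⊆ [[-A, A]] ×ℂ [[-B, B]] := by
  rintro _ (((⟨x, hx, rfl⟩ | ⟨t, ht, rfl⟩) | ⟨x, hx, rfl⟩) | ⟨t, ht, rfl⟩) <;>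
    simp_all [mem_reProdIm]

theorem mem_reProdIm_of_abs_lt (hre : |p.re| < A) (him : |p.im| < B) :
    p ∈ [[-A, A]] ×ℂ [[-B, B]] :=
  ⟨Set.mem_uIcc.2 (Or.inl (abs_le.1 hre.le)), Set.mem_uIcc.2 (Or.inl (abs_le.1 him.le))⟩

theorem notMem_rectBoundary (hre : |p.re| < A) (him : |p.im| < B) : p ∉ rectBoundary A B := by
  rintro (((⟨x, -, rfl⟩ | ⟨t, -, rfl⟩) | ⟨x, -, rfl⟩) | ⟨t, -, rfl⟩) <;> simp at hre him <;>
    linarith [le_abs_self A, le_abs_self B]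

theorem ne_of_mem_rectBoundary {z : ℂ} (hre : |p.re| < A) (him : |p.im| < B)
    (hz : z ∈ rectBoundary A B) : z ≠ p :=
  ne_of_mem_of_not_mem hz (notMem_rectBoundary hre him)

theorem sq_ne_sq_of_mem_rectBoundary {z : ℂ} (hre : |p.re| < A) (him : |p.im| < B)
    (hz : z ∈ rectBoundary A B) : z ^ 2 ≠ p ^ 2 := by
  rw [Ne, sq_eq_sq_iff_eq_or_eq_neg, not_or]
  exact ⟨ne_of_mem_rectBoundary hre him hz,
    ne_of_mem_rectBoundary (by rwa [neg_re, abs_neg]) (by rwa [neg_im, abs_neg]) hz⟩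

theorem continuousOn_inv_sub_pow_rectBoundary (hre : |p.re| < A) (him : |p.im| < B) (n : ℕ) :
    ContinuousOn (fun z => ((z - p) ^ n)⁻¹) (rectBoundary A B) :=
  (by fun_prop : Continuous fun z : ℂ => (z - p) ^ n).continuousOn.inv₀ fun _ hz =>
    pow_ne_zero _ (sub_ne_zero.2 (ne_of_mem_rectBoundary hre him hz))

theorem continuousOn_inv_sub_rectBoundary (hre : |p.re| < A) (him : |p.im| < B) :
    ContinuousOn (fun z => (z - p)⁻¹) (rectBoundary A B) := by
  simpa using continuousOn_inv_sub_pow_rectBoundary hre him 1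

theorem rectBoundaryIntegral_congr (h : Set.EqOn f g (rectBoundary A B)) :
    rectBoundaryIntegral A B f = rectBoundaryIntegral A B g := by
  unfold rectBoundaryIntegral
  rw [integral_congr fun x hx => h (mapsTo_bottom hx), integral_congr fun x hx => h (mapsTo_top hx),
    integral_congr fun t ht => h (mapsTo_right ht), integral_congr fun t ht => h (mapsTo_left ht)]

theorem rectBoundaryIntegral_const_mul (c : ℂ) (f : ℂ → ℂ) :
    rectBoundaryIntegral A B (fun z => c * f z) = c * rectBoundaryIntegral A B f := by
  simp only [rectBoundaryIntegral, integral_const_mul]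
  ring

theorem rectBoundaryIntegral_sum {ι : Type*} (s : Finset ι) {F : ι → ℂ → ℂ}
    (hF : ∀ k ∈ s, ContinuousOn (F k) (rectBoundary A B)) :
    rectBoundaryIntegral A B (fun z => ∑ k ∈ s, F k z) =
      ∑ k ∈ s, rectBoundaryIntegral A B (F k) := by
  have hint {γ : ℝ → ℂ} {a b : ℝ} (hγ : Continuous γ)
      (hmaps : Set.MapsTo γ [[a, b]] (rectBoundary A B)) (k) (hk : k ∈ s) :
      IntervalIntegrable (fun t => F k (γ t)) MeasureTheory.volume a b :=
    ((hF k hk).comp hγ.continuousOn hmaps).intervalIntegrable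
  simp only [rectBoundaryIntegral]
  rw [integral_finsetSum (hint (by fun_prop) mapsTo_bottom),
    integral_finsetSum (hint (by fun_prop) mapsTo_top),
    integral_finsetSum (hint (by fun_prop) mapsTo_right),
    integral_finsetSum (hint (by fun_prop) mapsTo_left)]
  simp only [mul_sum, ← sum_add_distrib, ← sum_sub_distrib]

theorem rectBoundaryIntegral_add (hf : ContinuousOn f (rectBoundary A B))
    (hg : ContinuousOn g (rectBoundary A B)) :
    rectBoundaryIntegral A B (fun z => f z + g z) =
      rectBoundaryIntegral A B f + rectBoundaryIntegral A B g := by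
  simpa using rectBoundaryIntegral_sum (F := ![f, g]) univ (by simp [Fin.forall_fin_two, hf, hg])

theorem rectBoundaryIntegral_eq_zero_of_differentiableOn
    (hf : DifferentiableOn ℂ f ([[-A, A]] ×ℂ [[-B, B]])) : rectBoundaryIntegral A B f = 0 := by
  have key := integral_boundary_rect_eq_zero_of_differentiableOn f ⟨-A, -B⟩ ⟨A, B⟩ hf
  simp only [ofReal_neg, neg_mul, ← sub_eq_add_neg, smul_eq_mul] at key
  rw [← key, rectBoundaryIntegral]
  simp only [mul_comm I]
  ring

theorem rectBoundaryIntegral_eq_zero_of_hasDerivAt {F : ℂ → ℂ}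
    (hF : ∀ z ∈ rectBoundary A B, HasDerivAt F (f z) z) (hf : ContinuousOn f (rectBoundary A B)) :
    rectBoundaryIntegral A B f = 0 := by
  have edge {γ : ℝ → ℂ} {v : ℂ} {a b : ℝ} (hγ : ∀ t, HasDerivAt γ v t)
      (hmaps : Set.MapsTo γ [[a, b]] (rectBoundary A B)) :
      v * ∫ t in a..b, f (γ t) = F (γ b) - F (γ a) :=
    mul_integral_comp_eq_sub_of_hasDerivAt hγ hmaps hf fun t ht => hF _ (hmaps ht)
  have hbot := edge hasDerivAt_bottom mapsTo_bottom
  have htop := edge hasDerivAt_top mapsTo_top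
  rw [one_mul] at hbot htop
  rw [rectBoundaryIntegral, hbot, htop, edge hasDerivAt_right mapsTo_right,
    edge hasDerivAt_left mapsTo_left]
  push_cast
  ring_nf

theorem rectBoundaryIntegral_inv_sub (hre : |p.re| < A) (him : |p.im| < B) :
    rectBoundaryIntegral A B (fun z => (z - p)⁻¹) = 2 * Real.pi * I := by
  obtain ⟨hre₁, hre₂⟩ := abs_lt.1 hre
  obtain ⟨him₁, him₂⟩ := abs_lt.1 him
  have hcont := continuousOn_inv_sub_rectBoundary hre him
  have hlog {z : ℂ} (hz : z - p ∈ slitPlane) : HasDerivAt (fun z => log (z - p)) (z - p)⁻¹ z := by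
    simpa using ((hasDerivAt_id z).sub_const p).clog hz
  have hlog' {z : ℂ} (hz : p - z ∈ slitPlane) : HasDerivAt (fun z => log (p - z)) (z - p)⁻¹ z := by
    have := (hasDerivAt_log hz).comp z ((hasDerivAt_id z).const_sub p)
    rwa [mul_neg_one, ← inv_neg, neg_sub] at this
  -- `log (z - p)` is a primitive along the bottom, right and top edges, `log (p - z)` along the
  -- left one; the two branches differ by `∓πi` at the two left corners.
  have hbot := mul_integral_comp_eq_sub_of_hasDerivAt hasDerivAt_bottom mapsTo_bottom hcont
    fun x _ => hlog (mem_slitPlane_iff.2 (Or.inr (by simp; linarith)))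
  have htop := mul_integral_comp_eq_sub_of_hasDerivAt hasDerivAt_top mapsTo_top hcont
    fun x _ => hlog (mem_slitPlane_iff.2 (Or.inr (by simp; linarith)))
  have hright := mul_integral_comp_eq_sub_of_hasDerivAt hasDerivAt_right mapsTo_right hcont
    fun t _ => hlog (mem_slitPlane_iff.2 (Or.inl (by simp; linarith)))
  have hleft := mul_integral_comp_eq_sub_of_hasDerivAt hasDerivAt_left mapsTo_left hcont
    fun t _ => hlog' (mem_slitPlane_iff.2 (Or.inl (by simp; linarith)))
  rw [one_mul] at hbot htop
  rw [rectBoundaryIntegral, hbot, htop, hright, hleft]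
  have hu : ((-A : ℝ) : ℂ) - I * B - p = -(A + p + I * B) := by push_cast; ring
  have hv : ((-A : ℝ) : ℂ) + I * B - p = -(A + p - I * B) := by push_cast; ring
  rw [hu, hv, log_neg_of_im_pos (by simp; linarith), log_neg_of_im_neg (by simp; linarith)]
  push_cast
  ring_nf

theorem rectBoundaryIntegral_inv_sub_sq (hre : |p.re| < A) (him : |p.im| < B) :
    rectBoundaryIntegral A B (fun z => ((z - p) ^ 2)⁻¹) = 0 := by
  refine rectBoundaryIntegral_eq_zero_of_hasDerivAt (F := fun z => -(z - p)⁻¹) (fun z hz => ?_)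
    (continuousOn_inv_sub_pow_rectBoundary hre him 2)
  simpa [neg_div, one_div] using (((hasDerivAt_id z).sub_const p).fun_inv
    (sub_ne_zero.2 (ne_of_mem_rectBoundary hre him hz))).fun_neg

theorem rectBoundaryIntegral_mul_inv_sub (hU : IsOpen U) (hsub : [[-A, A]] ×ℂ [[-B, B]] ⊆ U)
    (hf : DifferentiableOn ℂ f U) (hre : |p.re| < A) (him : |p.im| < B) :
    rectBoundaryIntegral A B (fun z => f z * (z - p)⁻¹) = 2 * Real.pi * I * f p := by
  have hg : DifferentiableOn ℂ (dslope f p) U :=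
    (differentiableOn_dslope (hU.mem_nhds (hsub (mem_reProdIm_of_abs_lt hre him)))).2 hf
  have hsplit : Set.EqOn (fun z => f z * (z - p)⁻¹) (fun z => dslope f p z + f p * (z - p)⁻¹)
      (rectBoundary A B) := fun z hz => by
    have hzp := sub_ne_zero.2 (ne_of_mem_rectBoundary hre him hz)
    have h := sub_smul_dslope f p z
    rw [smul_eq_mul] at h
    field_simp
    linear_combination -h
  rw [rectBoundaryIntegral_congr hsplit,
    rectBoundaryIntegral_add (hg.continuousOn.mono (rectBoundary_subset_reProdIm.trans hsub))
      (continuousOn_const.fun_mul (continuousOn_inv_sub_rectBoundary hre him)),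
    rectBoundaryIntegral_eq_zero_of_differentiableOn (hg.mono hsub),
    rectBoundaryIntegral_const_mul, rectBoundaryIntegral_inv_sub hre him]
  ring

theorem rectBoundaryIntegral_mul_inv_sub_sq (hU : IsOpen U)
    (hsub : [[-A, A]] ×ℂ [[-B, B]] ⊆ U) (hf : DifferentiableOn ℂ f U) (hre : |p.re| < A)
    (him : |p.im| < B) :
    rectBoundaryIntegral A B (fun z => f z * ((z - p) ^ 2)⁻¹) = 2 * Real.pi * I * deriv f p := by
  have hnhds : U ∈ nhds p := hU.mem_nhds (hsub (mem_reProdIm_of_abs_lt hre him))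
  have hg : DifferentiableOn ℂ (dslope (dslope f p) p) U :=
    (differentiableOn_dslope hnhds).2 ((differentiableOn_dslope hnhds).2 hf)
  have hcont₁ := continuousOn_inv_sub_rectBoundary hre him
  have hcont₂ := continuousOn_inv_sub_pow_rectBoundary hre him 2
  have hsplit : Set.EqOn (fun z => f z * ((z - p) ^ 2)⁻¹)
      (fun z => dslope (dslope f p) p z + (deriv f p * (z - p)⁻¹ + f p * ((z - p) ^ 2)⁻¹))
      (rectBoundary A B) := fun z hz => by
    have hzp := sub_ne_zero.2 (ne_of_mem_rectBoundary hre him hz)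
    have h₁ := sub_smul_dslope f p z
    have h₂ := sub_smul_dslope (dslope f p) p z
    rw [dslope_same, smul_eq_mul] at h₂
    rw [smul_eq_mul] at h₁
    field_simp
    linear_combination -(h₁ + (z - p) * h₂)
  rw [rectBoundaryIntegral_congr hsplit,
    rectBoundaryIntegral_add (hg.continuousOn.mono (rectBoundary_subset_reProdIm.trans hsub))
      ((continuousOn_const.fun_mul hcont₁).fun_add (continuousOn_const.fun_mul hcont₂)),
    rectBoundaryIntegral_add (continuousOn_const.fun_mul hcont₁)
      (continuousOn_const.fun_mul hcont₂),
    rectBoundaryIntegral_eq_zero_of_differentiableOn (hg.mono hsub),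
    rectBoundaryIntegral_const_mul, rectBoundaryIntegral_const_mul,
    rectBoundaryIntegral_inv_sub hre him, rectBoundaryIntegral_inv_sub_sq hre him]
  ring

theorem rectBoundaryIntegral_mul_inv_sq_sub_sq (hU : IsOpen U)
    (hsub : [[-A, A]] ×ℂ [[-B, B]] ⊆ U) (hf : DifferentiableOn ℂ f U) (hp : p ≠ 0)
    (hre : |p.re| < A) (him : |p.im| < B) :
    rectBoundaryIntegral A B (fun z => f z * (z ^ 2 - p ^ 2)⁻¹) =
      2 * Real.pi * I * ((f p - f (-p)) * (2 * p)⁻¹) := by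
  have hre' : |(-p).re| < A := by rwa [neg_re, abs_neg]
  have him' : |(-p).im| < B := by rwa [neg_im, abs_neg]
  have hcont {q : ℂ} (hre : |q.re| < A) (him : |q.im| < B) :
      ContinuousOn (fun z => f z * (z - q)⁻¹) (rectBoundary A B) :=
    (hf.continuousOn.mono (rectBoundary_subset_reProdIm.trans hsub)).fun_mul
      (continuousOn_inv_sub_rectBoundary hre him)
  have hsplit : Set.EqOn (fun z => f z * (z ^ 2 - p ^ 2)⁻¹)
      (fun z => (2 * p)⁻¹ * (f z * (z - p)⁻¹) + -(2 * p)⁻¹ * (f z * (z - -p)⁻¹))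
      (rectBoundary A B) := fun z hz => by
    have h₁ := sub_ne_zero.2 (ne_of_mem_rectBoundary hre him hz)
    have h₂ := sub_ne_zero.2 (ne_of_mem_rectBoundary hre' him' hz)
    simp only [sub_neg_eq_add] at h₂ ⊢
    rw [show z ^ 2 - p ^ 2 = (z - p) * (z + p) by ring]
    field_simp
    ring
  rw [rectBoundaryIntegral_congr hsplit,
    rectBoundaryIntegral_add (continuousOn_const.fun_mul (hcont hre him))
      (continuousOn_const.fun_mul (hcont hre' him')),
    rectBoundaryIntegral_const_mul, rectBoundaryIntegral_const_mul,
    rectBoundaryIntegral_mul_inv_sub hU hsub hf hre him,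
    rectBoundaryIntegral_mul_inv_sub hU hsub hf hre' him']
  ring

end Rectangle

section CentralDifference

noncomputable def centralDifferenceKernel (m : ℕ) (h : ℝ) (z : ℂ) : ℂ :=
  ((-1 : ℂ) ^ (m + 1) * (m ! : ℂ) ^ 2 * (h : ℂ) ^ (2 * m)) /
    (z ^ 2 * ∏ j ∈ Icc 1 m, (z ^ 2 - ((j : ℂ) * h) ^ 2))

noncomputable def centralDifferenceWeight (m j : ℕ) (h : ℝ) : ℂ :=
  ((-1 : ℂ) ^ (j + 1) * (m ! : ℂ) ^ 2) / ((j : ℂ) * h * ((m - j)! : ℂ) * ((m + j)! : ℂ))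

noncomputable def centralDifferenceKernelCoeff (m : ℕ) (h : ℝ) (k : ℕ) : ℂ :=
  (-1) ^ (m + 1) * (m ! : ℂ) ^ 2 * (h : ℂ) ^ (2 * m) *
    Lagrange.nodalWeight (range (m + 1)) (fun j : ℕ => ((j : ℂ) * h) ^ 2) k

variable {m k : ℕ} {h A B : ℝ} {U : Set ℂ} {y : ℂ → ℂ}

theorem injective_natCast_mul_sq (hh : h ≠ 0) :
    Function.Injective fun j : ℕ => ((j : ℂ) * h) ^ 2 := by
  intro j k hjk
  have hh' : (h : ℂ) ^ 2 ≠ 0 := pow_ne_zero 2 (ofReal_ne_zero.2 hh)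
  have : ((j ^ 2 : ℕ) : ℂ) = ((k ^ 2 : ℕ) : ℂ) := by
    push_cast
    exact mul_right_cancel₀ hh' (by simpa only [mul_pow] using hjk)
  exact Nat.pow_left_injective two_ne_zero (by exact_mod_cast this)

theorem centralDifferenceKernel_eq_sum (hh : h ≠ 0) {z : ℂ}
    (hz : ∀ j ∈ range (m + 1), z ^ 2 ≠ ((j : ℂ) * h) ^ 2) :
    centralDifferenceKernel m h z =
      ∑ k ∈ range (m + 1), centralDifferenceKernelCoeff m h k * (z ^ 2 - ((k : ℂ) * h) ^ 2)⁻¹ := by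
  have hprod : ∏ j ∈ range (m + 1), (z ^ 2 - ((j : ℂ) * h) ^ 2) =
      z ^ 2 * ∏ j ∈ Icc 1 m, (z ^ 2 - ((j : ℂ) * h) ^ 2) := by
    rw [range_add_one_eq_insert_Icc, prod_insert (by simp)]
    simp
  rw [centralDifferenceKernel, div_eq_mul_inv, ← hprod,
    inv_prod_sub_eq_sum_nodalWeight (injective_natCast_mul_sq hh).injOn ⟨0, by simp⟩ hz, mul_sum]
  simp only [centralDifferenceKernelCoeff, mul_assoc]

theorem centralDifferenceKernelCoeff_zero (hh : h ≠ 0) :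
    centralDifferenceKernelCoeff m h 0 = -1 := by
  have hfact : ∏ j ∈ (range (m + 1)).erase 0, (((0 : ℕ) : ℂ) + j) = m ! := by
    rw [range_add_one_eq_insert_Icc, erase_insert (by simp), ← Ico_add_one_right_eq_Icc,
      ← prod_Ico_id_eq_factorial]
    push_cast
    simp
  have hh' : (h : ℂ) ≠ 0 := ofReal_ne_zero.2 hh
  have hm : (m ! : ℂ) ≠ 0 := by exact_mod_cast m.factorial_ne_zero
  rw [centralDifferenceKernelCoeff, Lagrange.nodalWeight, prod_inv_distrib,
    prod_erase_range_sq_sub_sq _ (Nat.zero_le m), prod_erase_range_natCast_sub (Nat.zero_le m),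
    hfact, Nat.sub_zero, Nat.factorial_zero]
  field_simp
  ring

theorem centralDifferenceKernelCoeff_mul_inv (hh : h ≠ 0) (hk : 0 < k) (hkm : k ≤ m) :
    centralDifferenceKernelCoeff m h k * (2 * (k : ℂ) * h)⁻¹ = centralDifferenceWeight m k h := by
  have hasc : 2 * (k ! : ℂ) * ∏ j ∈ (range (m + 1)).erase k, ((k : ℂ) + j) = (m + k)! := by
    rw [Nat.add_comm m k]
    exact_mod_cast two_mul_factorial_mul_prod_erase_range_add hk hkm
  have hsign : (-1 : ℂ) ^ (m + 1) = (-1) ^ (k + 1) * (-1) ^ (m - k) := by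
    rw [← pow_add]
    congr 1
    omega
  have hh' : (h : ℂ) ≠ 0 := ofReal_ne_zero.2 hh
  have hk' : (k : ℂ) ≠ 0 := by exact_mod_cast hk.ne'
  rw [centralDifferenceKernelCoeff, centralDifferenceWeight, Lagrange.nodalWeight,
    prod_inv_distrib, prod_erase_range_sq_sub_sq _ hkm, prod_erase_range_natCast_sub hkm, hsign,
    ← hasc]
  field_simp

theorem abs_re_natCast_mul_lt (hk : k ∈ range (m + 1)) (hA : m * |h| < A) :
    |((k : ℂ) * h).re| < A := by
  have : (k : ℝ) ≤ m := by exact_mod_cast Nat.lt_succ_iff.1 (mem_range.1 hk)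
  simpa [abs_mul] using (mul_le_mul_of_nonneg_right this (abs_nonneg h)).trans_lt hA

theorem rectBoundaryIntegral_centralDifferenceKernel_mul_eq_sum
    (hsub : [[-A, A]] ×ℂ [[-B, B]] ⊆ U) (hy : DifferentiableOn ℂ y U) (hh : h ≠ 0)
    (hA : m * |h| < A) (hB : 0 < B) :
    rectBoundaryIntegral A B (fun z => centralDifferenceKernel m h z * y z) =
      ∑ k ∈ range (m + 1), centralDifferenceKernelCoeff m h k *
        rectBoundaryIntegral A B (fun z => y z * (z ^ 2 - ((k : ℂ) * h) ^ 2)⁻¹) := by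
  have hne {z : ℂ} (hz : z ∈ rectBoundary A B) {k : ℕ} (hk : k ∈ range (m + 1)) :
      z ^ 2 ≠ ((k : ℂ) * h) ^ 2 :=
    sq_ne_sq_of_mem_rectBoundary (abs_re_natCast_mul_lt hk hA) (by simpa using hB) hz
  have hcont {k : ℕ} (hk : k ∈ range (m + 1)) :
      ContinuousOn (fun z => y z * (z ^ 2 - ((k : ℂ) * h) ^ 2)⁻¹) (rectBoundary A B) :=
    (hy.continuousOn.mono (rectBoundary_subset_reProdIm.trans hsub)).fun_mul
      ((continuous_pow 2 |>.sub continuous_const).continuousOn.inv₀ fun z hz =>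
        sub_ne_zero.2 (hne hz hk))
  have hpf : Set.EqOn (fun z => centralDifferenceKernel m h z * y z)
      (fun z => ∑ k ∈ range (m + 1),
        centralDifferenceKernelCoeff m h k * (y z * (z ^ 2 - ((k : ℂ) * h) ^ 2)⁻¹))
      (rectBoundary A B) := fun z hz => by
    simp only [centralDifferenceKernel_eq_sum hh fun j hj => hne hz hj, sum_mul]
    exact sum_congr rfl fun k _ => by ring
  rw [rectBoundaryIntegral_congr hpf,
    rectBoundaryIntegral_sum _ fun k hk => continuousOn_const.fun_mul (hcont hk)]
  exact sum_congr rfl fun k _ => rectBoundaryIntegral_const_mul _ _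

theorem rectBoundaryIntegral_centralDifferenceKernel_mul (hU : IsOpen U)
    (hsub : [[-A, A]] ×ℂ [[-B, B]] ⊆ U) (hy : DifferentiableOn ℂ y U) (hh : h ≠ 0)
    (hA : m * |h| < A) (hB : 0 < B) :
    rectBoundaryIntegral A B (fun z => centralDifferenceKernel m h z * y z) =
      2 * Real.pi * I * (∑ j ∈ Icc 1 m, centralDifferenceWeight m j h *
        (y ((j : ℂ) * h) - y (-((j : ℂ) * h))) - deriv y 0) := by
  have him {k : ℕ} : |((k : ℂ) * h).im| < B := by simpa using hB
  have hdouble := rectBoundaryIntegral_mul_inv_sub_sq hU hsub hy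
    (abs_re_natCast_mul_lt (k := 0) (by simp) hA) him
  have hsimple : ∀ k ∈ Icc 1 m, centralDifferenceKernelCoeff m h k *
      rectBoundaryIntegral A B (fun z => y z * (z ^ 2 - ((k : ℂ) * h) ^ 2)⁻¹) =
        2 * Real.pi * I * (centralDifferenceWeight m k h * (y (k * h) - y (-(k * h)))) := by
    intro k hk
    obtain ⟨hk1, hkm⟩ := mem_Icc.1 hk
    rw [rectBoundaryIntegral_mul_inv_sq_sub_sq hU hsub hy
      (mul_ne_zero (Nat.cast_ne_zero.2 (by omega)) (ofReal_ne_zero.2 hh))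
      (abs_re_natCast_mul_lt (mem_range.2 (by omega)) hA) him,
      ← centralDifferenceKernelCoeff_mul_inv hh hk1 hkm]
    ring
  rw [rectBoundaryIntegral_centralDifferenceKernel_mul_eq_sum hsub hy hh hA hB,
    range_add_one_eq_insert_Icc, sum_insert (by simp), sum_congr rfl hsimple,
    centralDifferenceKernelCoeff_zero hh, ← mul_sum]
  simp only [CharP.cast_eq_zero, zero_mul, sub_zero, ne_eq, OfNat.ofNat_ne_zero,
    not_false_eq_true, zero_pow] at hdouble ⊢
  rw [hdouble]
  ring

end CentralDifference

theorem central_difference_error_contour_integral_general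
    (ρ ρ' h : ℝ) (hρ : 0 < ρ) (hρ' : ρ < ρ') (hh : 0 < h) (m : ℕ)
    (y : ℂ → ℂ)
    (hy : DifferentiableOn ℂ y {z : ℂ | |z.im| < ρ'}) :
    (∑ j ∈ Finset.Icc 1 m,
        ((-1 : ℂ) ^ (j + 1) * (m.factorial : ℂ) ^ 2) /
            ((j : ℂ) * h * ((m - j).factorial : ℂ) * ((m + j).factorial : ℂ)) *
          (y ((j : ℂ) * h) - y (-((j : ℂ) * h)))) - deriv y 0
      = (1 / (2 * Real.pi * I)) *
        (let K : ℂ → ℂ := fun z =>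
            ((-1 : ℂ) ^ (m + 1) * (m.factorial : ℂ) ^ 2 * (h : ℂ) ^ (2 * m)) /
              (z ^ 2 * ∏ j ∈ Finset.Icc 1 m, (z ^ 2 - ((j : ℂ) * h) ^ 2));
         let a : ℝ := m * h + ρ;
         (∫ x in (-a)..a, K ((x : ℂ) - I * ρ) * y ((x : ℂ) - I * ρ))
           + I * (∫ t in (-ρ)..ρ, K ((a : ℂ) + I * t) * y ((a : ℂ) + I * t))
           - (∫ x in (-a)..a, K ((x : ℂ) + I * ρ) * y ((x : ℂ) + I * ρ))
           - I * (∫ t in (-ρ)..ρ, K (-(a : ℂ) + I * t) * y (-(a : ℂ) + I * t))) := by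
  show ∑ j ∈ Icc 1 m, centralDifferenceWeight m j h * (y (j * h) - y (-(j * h))) - deriv y 0 =
    1 / (2 * Real.pi * I) *
      rectBoundaryIntegral (m * h + ρ) ρ (fun z => centralDifferenceKernel m h z * y z)
  have hrect : [[-(m * h + ρ), m * h + ρ]] ×ℂ [[-ρ, ρ]] ⊆ {z : ℂ | |z.im| < ρ'} := fun z hz => by
    have him : z.im ∈ [[-ρ, ρ]] := hz.2
    rw [Set.uIcc_of_le (by linarith)] at him
    obtain ⟨hlo, hhi⟩ := him
    show |z.im| < ρ'
    exact abs_lt.2 ⟨by linarith, by linarith⟩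
  rw [rectBoundaryIntegral_centralDifferenceKernel_mul
    (isOpen_lt (continuous_abs.comp continuous_im) continuous_const) hrect hy hh.ne'
    (by rw [abs_of_pos hh]; linarith) hρ, one_div, inv_mul_cancel_left₀ two_pi_I_ne_zero]

/-- Contour-integral representation of the central-difference error:
`D_m y(0) − y'(0) = (1/(2πi)) ∮_γ K_m(z) y(z) dz`, where `γ` is the counterclockwise
boundary of the rectangle `[-mh-ρ, mh+ρ] × [-ρ, ρ]` and
`K_m(z) = (-1)^{m+1}(m!)² h^{2m}/(z²(z²-h²)⋯(z²-(mh)²))`. -/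
theorem central_difference_error_contour_integral
    (ρ ρ' h : ℝ) (hρ : 0 < ρ) (hρ' : ρ < ρ') (hh : 0 < h) (m : ℕ) (hm : 1 ≤ m)
    (y : ℂ → ℂ)
    (hy : DifferentiableOn ℂ y {z : ℂ | |z.im| < ρ'})
    (M : ℝ) (hbd : ∀ z : ℂ, |z.im| ≤ ρ → ‖y z‖ ≤ M) :
    (∑ j ∈ Finset.Icc 1 m,
        ((-1 : ℂ) ^ (j + 1) * (m.factorial : ℂ) ^ 2) /
            ((j : ℂ) * h * ((m - j).factorial : ℂ) * ((m + j).factorial : ℂ)) *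
          (y ((j : ℂ) * h) - y (-((j : ℂ) * h)))) - deriv y 0
      = (1 / (2 * Real.pi * I)) *
        (let K : ℂ → ℂ := fun z =>
            ((-1 : ℂ) ^ (m + 1) * (m.factorial : ℂ) ^ 2 * (h : ℂ) ^ (2 * m)) /
              (z ^ 2 * ∏ j ∈ Finset.Icc 1 m, (z ^ 2 - ((j : ℂ) * h) ^ 2));
         let a : ℝ := m * h + ρ;
         (∫ x in (-a)..a, K ((x : ℂ) - I * ρ) * y ((x : ℂ) - I * ρ))
           + I * (∫ t in (-ρ)..ρ, K ((a : ℂ) + I * t) * y ((a : ℂ) + I * t))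
           - (∫ x in (-a)..a, K ((x : ℂ) + I * ρ) * y ((x : ℂ) + I * ρ))
           - I * (∫ t in (-ρ)..ρ, K (-(a : ℂ) + I * t) * y (-(a : ℂ) + I * t))) :=
  central_difference_error_contour_integral_general ρ ρ' h hρ hρ' hh m y hy
end

section
/- Let Δ_k : [0, T] → ℝ≥0 satisfy Δ₁(t) = tM and Δ_{k+1}(t) ≤ ∫₀^t (M/(η(r − sM))) Δ_k(s) ds for all k ≥ 1, where T < r/M and 0 < η < 1. Then Δ_k(t) → 0 as k → ∞, uniformly in t ∈ [0, T]. -/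
/-! Bounding the kernel `M / (η (r - sM))` on `[0, T]` by its value `K` at `s = T` reduces the
recursion to `Δ_{k+1}(t) ≤ K ∫₀^t Δ_k`, whence `Δ_{k+1}(t) ≤ TM (Kt)^k / k!` by induction. This
bound is uniform in `t ∈ [0, T]` and tends to `0` because factorials beat geometric growth. -/

open Set Filter Topology intervalIntegral
open scoped Nat

theorem tendstoUniformlyOn_zero_of_norm_le {ι α E : Type*} [SeminormedAddCommGroup E]
    {l : Filter ι} {F : ι → α → E} {s : Set α} {b : ι → ℝ}
    (hb : Tendsto b l (𝓝 0)) (hF : ∀ᶠ i in l, ∀ x ∈ s, ‖F i x‖ ≤ b i) :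
    TendstoUniformlyOn F 0 l s := by
  rw [Metric.tendstoUniformlyOn_iff]
  intro ε hε
  filter_upwards [hF, hb.eventually (gt_mem_nhds hε)] with i hFi hbi x hx
  simpa only [Pi.zero_apply, dist_zero_left] using (hFi x hx).trans_lt hbi

theorem integral_mul_le_const_mul_integral {f g : ℝ → ℝ} {a b K : ℝ} (hab : a ≤ b)
    (hg : ContinuousOn g (Icc a b)) (hf : ContinuousOn f (Icc a b))
    (hgK : ∀ s ∈ Icc a b, g s ≤ K) (hf₀ : ∀ s ∈ Icc a b, 0 ≤ f s) :
    ∫ s in a..b, g s * f s ≤ K * ∫ s in a..b, f s := by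
  rw [← integral_const_mul]
  refine integral_mono_on hab ?_ ?_ fun s hs => mul_le_mul_of_nonneg_right (hgK s hs) (hf₀ s hs)
  · exact (hg.mul hf).intervalIntegrable_of_Icc hab
  · exact (hf.const_smul K).intervalIntegrable_of_Icc hab

theorem const_mul_integral_mul_pow_div_factorial (C K t : ℝ) (k : ℕ) :
    K * ∫ s in (0 : ℝ)..t, C * (K * s) ^ k / k ! = C * (K * t) ^ (k + 1) / (k + 1)! := by
  have hpow : ∀ s : ℝ, C * (K * s) ^ k / k ! = C * K ^ k / k ! * s ^ k := fun s => by ring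
  simp_rw [hpow, integral_const_mul, integral_pow, Nat.factorial_succ]
  push_cast
  field_simp
  ring

theorem le_mul_pow_div_factorial_of_le_const_mul_integral {f : ℕ → ℝ → ℝ} {C K T : ℝ}
    (hK : 0 ≤ K) (hcont : ∀ k, ContinuousOn (f k) (Icc 0 T))
    (h₀ : ∀ t ∈ Icc 0 T, f 0 t ≤ C)
    (hstep : ∀ k, ∀ t ∈ Icc 0 T, f (k + 1) t ≤ K * ∫ s in (0 : ℝ)..t, f k s) :
    ∀ k, ∀ t ∈ Icc 0 T, f k t ≤ C * (K * t) ^ k / k ! := by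
  intro k
  induction k with
  | zero => simpa using h₀
  | succ k ih =>
    intro t ht
    have hsub : Icc 0 t ⊆ Icc 0 T := Icc_subset_Icc_right ht.2
    have hint : ∫ s in (0 : ℝ)..t, f k s ≤ ∫ s in (0 : ℝ)..t, C * (K * s) ^ k / k ! :=
      integral_mono_on ht.1 (((hcont k).mono hsub).intervalIntegrable_of_Icc ht.1)
        (Continuous.intervalIntegrable (by fun_prop) 0 t) fun s hs => ih s (hsub hs)
    calc f (k + 1) t ≤ K * ∫ s in (0 : ℝ)..t, f k s := hstep k t ht
      _ ≤ K * ∫ s in (0 : ℝ)..t, C * (K * s) ^ k / k ! := mul_le_mul_of_nonneg_left hint hK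
      _ = C * (K * t) ^ (k + 1) / (k + 1)! := const_mul_integral_mul_pow_div_factorial C K t k

section Kernel

variable {M r η T : ℝ}

theorem kernel_denom_pos (hM : 0 < M) (hη : 0 < η) (hTM : T * M < r) {s : ℝ} (hs : s ≤ T) :
    0 < η * (r - s * M) := by
  have : s * M ≤ T * M := mul_le_mul_of_nonneg_right hs hM.le
  exact mul_pos hη (by linarith)

theorem kernel_le_kernel_right (hM : 0 < M) (hη : 0 < η) (hTM : T * M < r) {s : ℝ}
    (hs : s ≤ T) : M / (η * (r - s * M)) ≤ M / (η * (r - T * M)) := by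
  refine div_le_div_of_nonneg_left hM.le (kernel_denom_pos hM hη hTM le_rfl) ?_
  have : s * M ≤ T * M := mul_le_mul_of_nonneg_right hs hM.le
  nlinarith

theorem continuousOn_kernel (hM : 0 < M) (hη : 0 < η) (hTM : T * M < r) :
    ContinuousOn (fun s => M / (η * (r - s * M))) (Iic T) :=
  continuousOn_const.div (by fun_prop) fun _ hs => (kernel_denom_pos hM hη hTM hs).ne'

theorem integral_kernel_mul_le (hM : 0 < M) (hη : 0 < η) (hTM : T * M < r) {f : ℝ → ℝ}
    (hf : ContinuousOn f (Icc 0 T)) (hf₀ : ∀ s ∈ Icc 0 T, 0 ≤ f s) {t : ℝ} (ht : t ∈ Icc 0 T) :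
    ∫ s in (0 : ℝ)..t, M / (η * (r - s * M)) * f s ≤
      M / (η * (r - T * M)) * ∫ s in (0 : ℝ)..t, f s := by
  have hsub : Icc 0 t ⊆ Icc 0 T := Icc_subset_Icc_right ht.2
  exact integral_mul_le_const_mul_integral ht.1
    ((continuousOn_kernel hM hη hTM).mono fun s hs => (hsub hs).2) (hf.mono hsub)
    (fun s hs => kernel_le_kernel_right hM hη hTM (hs.2.trans ht.2)) fun s hs => hf₀ s (hsub hs)

end Kernel

theorem picard_differences_tend_to_zero_general
    (M r η T : ℝ) (hM : 0 < M) (hη₀ : 0 < η)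
    (hT : T < r / M)
    (Δ : ℕ → ℝ → ℝ)
    (hnonneg : ∀ k, ∀ t ∈ Set.Icc (0 : ℝ) T, 0 ≤ Δ k t)
    (hcont : ∀ k, ContinuousOn (Δ k) (Set.Icc (0 : ℝ) T))
    (hΔ1 : ∀ t ∈ Set.Icc (0 : ℝ) T, Δ 1 t = t * M)
    (hrec : ∀ k, 1 ≤ k → ∀ t ∈ Set.Icc (0 : ℝ) T,
      Δ (k + 1) t ≤ ∫ s in (0 : ℝ)..t, M / (η * (r - s * M)) * Δ k s) :
    TendstoUniformlyOn (fun k t => Δ k t) 0 Filter.atTop (Set.Icc (0 : ℝ) T) := by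
  have hTM : T * M < r := (lt_div_iff₀ hM).mp hT
  set K := M / (η * (r - T * M))
  have hK : 0 ≤ K := div_nonneg hM.le (kernel_denom_pos hM hη₀ hTM le_rfl).le
  have hstep : ∀ k, ∀ t ∈ Icc 0 T, Δ (k + 2) t ≤ K * ∫ s in (0 : ℝ)..t, Δ (k + 1) s :=
    fun k t ht => (hrec (k + 1) (Nat.le_add_left 1 k) t ht).trans <|
      integral_kernel_mul_le hM hη₀ hTM (hcont (k + 1)) (hnonneg (k + 1)) ht
  have hbound : ∀ k, ∀ t ∈ Icc 0 T, Δ (k + 1) t ≤ T * M * (K * t) ^ k / k ! :=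
    le_mul_pow_div_factorial_of_le_const_mul_integral (f := fun k => Δ (k + 1)) hK
      (fun k => hcont (k + 1))
      (fun t ht => (hΔ1 t ht).trans_le (mul_le_mul_of_nonneg_right ht.2 hM.le)) hstep
  refine tendstoUniformlyOn_zero_of_norm_le (b := fun k => T * M * (K * T) ^ (k - 1) / (k - 1)!)
    ((tendsto_add_atTop_iff_nat 1).mp ?_) ?_
  · simpa [mul_div_assoc] using
      (FloorSemiring.tendsto_pow_div_factorial_atTop (K * T)).const_mul (T * M)
  filter_upwards [eventually_ge_atTop 1] with k hk t ht
  obtain ⟨m, rfl⟩ := Nat.exists_eq_add_of_le' hk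
  have hT₀ : 0 ≤ T := ht.1.trans ht.2
  rw [Real.norm_of_nonneg (hnonneg _ t ht), Nat.add_sub_cancel]
  refine (hbound m t ht).trans ?_
  gcongr
  · exact mul_nonneg hK ht.1
  · exact ht.2

/-- Convergence of the Picard iteration differences: if `Δ₁(t) = tM` and
`Δ_{k+1}(t) ≤ ∫₀^t (M/(η(r − sM))) Δ_k(s) ds`, with `T < r/M`, then
`Δ_k → 0` uniformly on `[0, T]`. -/
theorem picard_differences_tend_to_zero
    (M r η T : ℝ) (hM : 0 < M) (hr : 0 < r) (hη₀ : 0 < η) (hη₁ : η < 1)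
    (hT₀ : 0 ≤ T) (hT : T < r / M)
    (Δ : ℕ → ℝ → ℝ)
    (hnonneg : ∀ k, ∀ t ∈ Set.Icc (0 : ℝ) T, 0 ≤ Δ k t)
    (hcont : ∀ k, ContinuousOn (Δ k) (Set.Icc (0 : ℝ) T))
    (hΔ1 : ∀ t ∈ Set.Icc (0 : ℝ) T, Δ 1 t = t * M)
    (hrec : ∀ k, 1 ≤ k → ∀ t ∈ Set.Icc (0 : ℝ) T,
      Δ (k + 1) t ≤ ∫ s in (0 : ℝ)..t, M / (η * (r - s * M)) * Δ k s) :
    TendstoUniformlyOn (fun k t => Δ k t) 0 Filter.atTop (Set.Icc (0 : ℝ) T) :=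
  picard_differences_tend_to_zero_general M r η T hM hη₀ hT Δ hnonneg hcont hΔ1 hrec
end
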